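/- Let n ≥ 1 be an integer, N an integer with 0 ≤ N ≤ n−1, and a₁,…,a_N ≥ 0 real numbers. Let U ⊂ ℂⁿ be the open unit polydisk and ψ(z) = log(|z_n|² ∏_{k=1}^N |z_k|^{2a_k}). Let g : ℂ^{n−1} → ℝ be continuous with compact support contained in {z′ : |z′_i| < 1 for all i, and z′_k ≠ 0 for 1 ≤ k ≤ N}, and define g̃ : ℂⁿ → ℝ by g̃(z′, z_n) = g(z′)(1 − |z_n|) for |z_n| ≤ 1 and g̃ = 0 otherwise. Write A(z′) = ∏_{k=1}^N |z′_k|^{a_k}. Then there exists t₀ < 0 such that for all t ≤ t₀, ∫_{U ∩ {t < ψ < t+1}} g̃ e^{−ψ} dλ_{2n} = π ∫_{ℂ^{n−1}} g(z′) A(z′)^{−2} dλ_{2n−2}(z′) − 2π(√e − 1) e^{t/2} ∫_{ℂ^{n−1}} g(z′) A(z′)^{−3} dλ_{2n−2}(z′). -/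

import Mathlib

open MeasureTheory Filter Real Set

/-!
Write `z = (z', w)` with `w = z_n`. Then `ψ = log (|w|² A(z')²)`, so for fixed `z'` the slab
`t < ψ < t + 1` is the annulus `e^{t/2}/A < |w| < e^{(t+1)/2}/A`. On the support of `g` the weight
`A` is bounded below by some `c > 0`, so once `e^{(t+1)/2} ≤ c` this annulus lies in the unit disc
and the cut-offs `|w| ≤ 1`, `|w| < 1` are automatic. In polar coordinates the inner integral is
`(2π / A²) ∫_{r₁}^{r₂} (1/r - 1) dr = (2π / A²) (1/2 - (√e - 1) e^{t/2} / A)`, and Fubini gives the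
formula.
-/

theorem integral_annulus_fun_norm {r₁ r₂ : ℝ} (h₁ : 0 ≤ r₁) (h₁₂ : r₁ ≤ r₂) (f : ℝ → ℝ) :
    ∫ w : ℂ in {w | r₁ < ‖w‖ ∧ ‖w‖ < r₂}, f ‖w‖ = 2 * π * ∫ r in r₁..r₂, r * f r := by
  have hind (w : ℂ) : ((‖·‖) ⁻¹' Ioo r₁ r₂).indicator (fun w => f ‖w‖) w =
      (Ioo r₁ r₂).indicator f ‖w‖ := indicator_comp_right _
  rw [show {w : ℂ | r₁ < ‖w‖ ∧ ‖w‖ < r₂} = (‖·‖) ⁻¹' Ioo r₁ r₂ from rfl,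
    ← integral_indicator (measurableSet_Ioo.preimage continuous_norm.measurable)]
  simp_rw [hind]
  rw [integral_fun_norm_addHaar, Complex.finrank_real_complex, Measure.real,
    Complex.volume_ball]
  simp_rw [smul_eq_mul, ← indicator_mul_right _ (fun y : ℝ => y ^ (2 - 1))]
  rw [integral_indicator measurableSet_Ioo, Measure.restrict_restrict measurableSet_Ioo,
    inter_eq_self_of_subset_left (Ioo_subset_Ioi_self.trans (Ioi_subset_Ioi h₁)),
    intervalIntegral.integral_of_le h₁₂, integral_Ioc_eq_integral_Ioo]
  simp [mul_assoc]

theorem integral_inv_sub_one {r₁ r₂ : ℝ} (h₁ : 0 < r₁) (h₁₂ : r₁ ≤ r₂) :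
    ∫ r in r₁..r₂, (r⁻¹ - 1) = log (r₂ / r₁) - (r₂ - r₁) := by
  rw [intervalIntegral.integral_sub _ intervalIntegrable_const,
    integral_inv_of_pos h₁ (h₁.trans_le h₁₂)]
  · simp
  · refine (continuousOn_inv₀.mono fun r hr => ?_).intervalIntegrable
    rw [uIcc_of_le h₁₂] at hr
    exact (h₁.trans_le hr.1).ne'

theorem lt_log_sq_mul_sq_iff {x B s : ℝ} (hx : 0 < x) (hB : 0 < B) :
    s < log (x ^ 2 * B ^ 2) ↔ exp (s / 2) / B < x := by
  rw [← mul_pow, log_pow, div_lt_iff₀ hB, ← lt_log_iff_exp_lt (by positivity)]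
  push_cast
  constructor <;> intro h <;> linarith

theorem log_sq_mul_sq_lt_iff {x B s : ℝ} (hx : 0 < x) (hB : 0 < B) :
    log (x ^ 2 * B ^ 2) < s ↔ x < exp (s / 2) / B := by
  rw [← mul_pow, log_pow, lt_div_iff₀ hB, ← log_lt_iff_lt_exp (by positivity)]
  push_cast
  constructor <;> intro h <;> linarith

/-- The slice of `{t < ψ < t + 1}` over a point `z'` with `A(z') = B`. -/
def logShell (B t : ℝ) : Set ℂ :=
  {w | t < log (‖w‖ ^ 2 * B ^ 2) ∧ log (‖w‖ ^ 2 * B ^ 2) < t + 1}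

/-- `t + 1 ≤ 0` keeps out `w = 0`, where the junk value `log 0 = 0` would otherwise lie in
`(t, t + 1)`. -/
theorem logShell_eq {B t : ℝ} (hB : 0 < B) (ht : t + 1 ≤ 0) :
    logShell B t = {w | exp (t / 2) / B < ‖w‖ ∧ ‖w‖ < exp ((t + 1) / 2) / B} := by
  ext w
  rcases (norm_nonneg w).eq_or_lt with hw | hw
  · have h₁ : ¬ exp (t / 2) / B < ‖w‖ := by rw [← hw]; exact (div_pos (exp_pos _) hB).not_gt
    have h₂ : ¬ log (‖w‖ ^ 2 * B ^ 2) < t + 1 := by rw [← hw]; simpa using ht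
    simp only [logShell, mem_ofPred_eq, h₁, h₂, and_false, false_and]
  · simp only [logShell, mem_ofPred_eq, lt_log_sq_mul_sq_iff hw hB, log_sq_mul_sq_lt_iff hw hB]

theorem measurableSet_logShell (B t : ℝ) : MeasurableSet (logShell B t) := by
  rw [logShell, ofPred_and]
  exact (measurableSet_lt measurable_const (by fun_prop)).inter
    (measurableSet_lt (by fun_prop) measurable_const)

theorem norm_lt_one_of_mem_logShell {B t : ℝ} {w : ℂ} (hB : exp ((t + 1) / 2) ≤ B)
    (ht : t + 1 ≤ 0) (hw : w ∈ logShell B t) : ‖w‖ < 1 := by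
  have hB0 : 0 < B := (exp_pos _).trans_le hB
  rw [logShell_eq hB0 ht] at hw
  exact hw.2.trans_le ((div_le_one hB0).2 hB)

theorem setIntegral_logShell {B t : ℝ} (hB : 0 < B) (ht : t + 1 ≤ 0) :
    ∫ w in logShell B t, (1 - ‖w‖) * exp (-log (‖w‖ ^ 2 * B ^ 2)) =
      π * B ^ (-(2:ℝ)) - 2 * π * (√(exp 1) - 1) * exp (t / 2) * B ^ (-(3:ℝ)) := by
  set r₁ := exp (t / 2) / B
  set r₂ := exp ((t + 1) / 2) / B
  have hr₁ : 0 < r₁ := by positivity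
  have hr₁₂ : r₁ ≤ r₂ := div_le_div_of_nonneg_right (exp_le_exp.mpr (by linarith)) hB.le
  have hradial : ∫ r in r₁..r₂, r * ((1 - r) * exp (-log (r ^ 2 * B ^ 2))) =
      (B ^ 2)⁻¹ * ∫ r in r₁..r₂, (r⁻¹ - 1) := by
    rw [← intervalIntegral.integral_const_mul]
    refine intervalIntegral.integral_congr fun r hr => ?_
    rw [uIcc_of_le hr₁₂] at hr
    have hr0 : 0 < r := hr₁.trans_le hr.1
    simp only [exp_neg, exp_log (by positivity : 0 < r ^ 2 * B ^ 2)]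
    field_simp
  have hratio : r₂ / r₁ = exp (1 / 2) := by
    simp only [r₁, r₂]
    rw [div_div_div_cancel_right₀ hB.ne', ← exp_sub]
    ring_nf
  rw [logShell_eq hB ht,
    integral_annulus_fun_norm hr₁.le hr₁₂ (fun r => (1 - r) * exp (-log (r ^ 2 * B ^ 2))),
    hradial, integral_inv_sub_one hr₁ hr₁₂, hratio, log_exp, ← exp_half]
  simp only [r₁, r₂, show (t + 1) / 2 = t / 2 + 1 / 2 by ring, exp_add, rpow_neg hB.le]
  norm_cast
  field_simp

theorem integral_eq_integral_snoc {α E : Type*} [MeasureSpace α]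
    [SigmaFinite (volume : Measure α)] [NormedAddCommGroup E] [NormedSpace ℝ E] {m : ℕ}
    {f : (Fin (m + 1) → α) → E} (hf : Integrable f) :
    ∫ z, f z = ∫ z' : Fin m → α, ∫ w : α, f (Fin.snoc z' w) := by
  set e := MeasurableEquiv.piFinSuccAbove (fun _ : Fin (m + 1) => α) (Fin.last m)
  have he : MeasurePreserving e.symm (volume.prod volume) volume := by
    simpa only [Measure.volume_eq_prod] using (volume_preserving_piFinSuccAbove _ _).symm
  have hsnoc (p : α × (Fin m → α)) : e.symm p = Fin.snoc p.2 p.1 := Fin.insertNth_last' _ _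
  have hint : Integrable (fun p : α × (Fin m → α) => f (Fin.snoc p.2 p.1))
      (volume.prod volume) := by
    simpa only [Function.comp_def, hsnoc] using
      (he.integrable_comp_emb e.symm.measurableEmbedding).2 hf
  rw [← he.integral_comp e.symm.measurableEmbedding]
  simp only [hsnoc]
  exact integral_prod_symm _ hint

theorem HasCompactSupport.integrable_mul_of_continuousAt {X : Type*} [TopologicalSpace X]
    [MeasurableSpace X] [OpensMeasurableSpace X] {μ : Measure X} [IsFiniteMeasureOnCompacts μ]
    {g u : X → ℝ} (hg : Continuous g) (hgsupp : HasCompactSupport g)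
    (hu : ∀ x ∈ tsupport g, ContinuousAt u x) :
    Integrable (fun x => g x * u x) μ :=
  (continuous_of_tsupport fun x hx => hg.continuousAt.mul
    (hu x (tsupport_mul_subset_left hx))).integrable_of_hasCompactSupport hgsupp.mul_right

/-- `U ∩ {t < ψ < t + 1}`, with `U` the unit polydisc. -/
def polydiscSlab {ι : Type*} (ψ : (ι → ℂ) → ℝ) (t : ℝ) : Set (ι → ℂ) :=
  {z | (∀ i, ‖z i‖ < 1) ∧ t < ψ z ∧ ψ z < t + 1}

theorem measurableSet_polydiscSlab {ι : Type*} [Countable ι] {ψ : (ι → ℂ) → ℝ}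
    (hψ : Measurable ψ) (t : ℝ) : MeasurableSet (polydiscSlab ψ t) := by
  rw [polydiscSlab, ofPred_and, ofPred_and, ofPred_forall]
  exact (MeasurableSet.iInter fun i => measurableSet_lt (by fun_prop) measurable_const).inter
    ((measurableSet_lt measurable_const hψ).inter (measurableSet_lt hψ measurable_const))

theorem polydiscSlab_subset_ball {ι : Type*} [Fintype ι] (ψ : (ι → ℂ) → ℝ) (t : ℝ) :
    polydiscSlab ψ t ⊆ Metric.ball 0 1 := fun z hz => by
  simpa [pi_norm_lt_iff one_pos] using hz.1

section SncModel

variable {m : ℕ} {ψ gext : (Fin (m + 1) → ℂ) → ℝ} {g A : (Fin m → ℂ) → ℝ}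

theorem integrableOn_polydiscSlab (hψm : Measurable ψ)
    (hgext : ∀ z, gext z =
      if ‖z (Fin.last m)‖ ≤ 1 then g (Fin.init z) * (1 - ‖z (Fin.last m)‖) else 0)
    (hg : Continuous g) (hgsupp : HasCompactSupport g) (t : ℝ) :
    IntegrableOn (fun z => gext z * exp (-ψ z)) (polydiscSlab ψ t) := by
  obtain ⟨C, hC⟩ := hg.bounded_above_of_compact_support hgsupp
  have hgextm : Measurable gext := by
    rw [funext hgext]
    exact Measurable.ite (measurableSet_le (by fun_prop) (by fun_prop)) (by fun_prop)
      (by fun_prop)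
  have hgext_le (z : Fin (m + 1) → ℂ) : |gext z| ≤ C := by
    rw [hgext]
    split_ifs with hz
    · rw [abs_mul, abs_of_nonneg (sub_nonneg.2 hz)]
      exact (mul_le_of_le_one_right (abs_nonneg _)
        (by linarith [norm_nonneg (z (Fin.last m))])).trans (hC _)
    · simpa using (norm_nonneg _).trans (hC 0)
  refine IntegrableOn.of_bound
    ((measure_mono (polydiscSlab_subset_ball ψ t)).trans_lt measure_ball_lt_top) (by fun_prop)
    (C * exp (-t)) (ae_restrict_of_forall_mem (measurableSet_polydiscSlab hψm t) fun z hz => ?_)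
  rw [norm_mul, Real.norm_eq_abs, norm_of_nonneg (exp_pos _).le]
  exact mul_le_mul (hgext_le z) (exp_le_exp.2 (by linarith [hz.2.1])) (exp_pos _).le
    ((abs_nonneg _).trans (hgext_le z))

theorem indicator_snoc_eq_mul_indicator_logShell {t : ℝ}
    (hψ : ∀ z, ψ z = log (‖z (Fin.last m)‖ ^ 2 * A (Fin.init z) ^ 2))
    (hgext : ∀ z, gext z =
      if ‖z (Fin.last m)‖ ≤ 1 then g (Fin.init z) * (1 - ‖z (Fin.last m)‖) else 0)
    (hsupp : ∀ z', g z' ≠ 0 → (∀ i, ‖z' i‖ < 1) ∧ exp ((t + 1) / 2) ≤ A z')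
    (ht : t + 1 ≤ 0) (z' : Fin m → ℂ) (w : ℂ) :
    (polydiscSlab ψ t).indicator (fun z => gext z * exp (-ψ z)) (Fin.snoc z' w) =
      g z' * (logShell (A z') t).indicator
        (fun w => (1 - ‖w‖) * exp (-log (‖w‖ ^ 2 * A z' ^ 2))) w := by
  by_cases hg0 : g z' = 0
  · simp [hgext, hg0]
  obtain ⟨hz', hA⟩ := hsupp z' hg0
  have hmem : Fin.snoc z' w ∈ polydiscSlab ψ t ↔ w ∈ logShell (A z') t := by
    simp only [polydiscSlab, mem_ofPred_eq, Fin.forall_fin_succ', Fin.snoc_castSucc,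
      Fin.snoc_last, hψ, Fin.init_snoc]
    exact ⟨fun h => h.2, fun h => ⟨⟨hz', norm_lt_one_of_mem_logShell hA ht h⟩, h⟩⟩
  by_cases hw : w ∈ logShell (A z') t
  · rw [indicator_of_mem (hmem.2 hw), indicator_of_mem hw, hgext, hψ, Fin.snoc_last,
      Fin.init_snoc, if_pos (norm_lt_one_of_mem_logShell hA ht hw).le, mul_assoc]
  · rw [indicator_of_notMem (mt hmem.1 hw), indicator_of_notMem hw, mul_zero]

theorem setIntegral_polydiscSlab_eq {t : ℝ}
    (hψ : ∀ z, ψ z = log (‖z (Fin.last m)‖ ^ 2 * A (Fin.init z) ^ 2)) (hψm : Measurable ψ)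
    (hgext : ∀ z, gext z =
      if ‖z (Fin.last m)‖ ≤ 1 then g (Fin.init z) * (1 - ‖z (Fin.last m)‖) else 0)
    (hg : Continuous g) (hgsupp : HasCompactSupport g)
    (hsupp : ∀ z', g z' ≠ 0 → (∀ i, ‖z' i‖ < 1) ∧ exp ((t + 1) / 2) ≤ A z')
    (ht : t + 1 ≤ 0) (hint₂ : Integrable fun z' => g z' * A z' ^ (-(2:ℝ)))
    (hint₃ : Integrable fun z' => g z' * A z' ^ (-(3:ℝ))) :
    ∫ z in polydiscSlab ψ t, gext z * exp (-ψ z) =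
      π * (∫ z', g z' * A z' ^ (-(2:ℝ)))
        - 2 * π * (√(exp 1) - 1) * exp (t / 2) * (∫ z', g z' * A z' ^ (-(3:ℝ))) := by
  have hslice (z' : Fin m → ℂ) :
      g z' * ∫ w in logShell (A z') t, (1 - ‖w‖) * exp (-log (‖w‖ ^ 2 * A z' ^ 2)) =
        π * (g z' * A z' ^ (-(2:ℝ)))
          - 2 * π * (√(exp 1) - 1) * exp (t / 2) * (g z' * A z' ^ (-(3:ℝ))) := by
    by_cases hg0 : g z' = 0
    · simp [hg0]
    rw [setIntegral_logShell ((exp_pos _).trans_le (hsupp z' hg0).2) ht]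
    ring
  have hS := measurableSet_polydiscSlab hψm t
  have hint := (integrableOn_polydiscSlab hψm hgext hg hgsupp t).integrable_indicator hS
  rw [← integral_indicator hS, integral_eq_integral_snoc hint]
  simp_rw [indicator_snoc_eq_mul_indicator_logShell hψ hgext hsupp ht, integral_const_mul,
    integral_indicator (measurableSet_logShell _ _), hslice]
  rw [integral_sub (hint₂.const_mul _) (hint₃.const_mul _), integral_const_mul,
    integral_const_mul]

theorem exists_setIntegral_polydiscSlab_eq
    (hψ : ∀ z, ψ z = log (‖z (Fin.last m)‖ ^ 2 * A (Fin.init z) ^ 2)) (hψm : Measurable ψ)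
    (hgext : ∀ z, gext z =
      if ‖z (Fin.last m)‖ ≤ 1 then g (Fin.init z) * (1 - ‖z (Fin.last m)‖) else 0)
    (hg : Continuous g) (hgsupp : HasCompactSupport g)
    (hsupp : ∀ z' ∈ tsupport g, (∀ i, ‖z' i‖ < 1) ∧ 0 < A z' ∧ ContinuousAt A z') :
    ∃ t₀ : ℝ, t₀ < 0 ∧ ∀ t ≤ t₀,
      ∫ z in polydiscSlab ψ t, gext z * exp (-ψ z) =
        π * (∫ z', g z' * A z' ^ (-(2:ℝ)))
          - 2 * π * (√(exp 1) - 1) * exp (t / 2) * (∫ z', g z' * A z' ^ (-(3:ℝ))) := by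
  obtain ⟨c, hc, hcA⟩ := hgsupp.isCompact.exists_forall_le'
    (fun z' hz' => (hsupp z' hz').2.2.continuousWithinAt) fun z' hz' => (hsupp z' hz').2.1
  have hint (p : ℝ) : Integrable fun z' => g z' * A z' ^ p :=
    hgsupp.integrable_mul_of_continuousAt hg fun z' hz' =>
      (hsupp z' hz').2.2.rpow_const (Or.inl (hsupp z' hz').2.1.ne')
  refine ⟨min (-1) (2 * log c - 1), (min_le_left _ _).trans_lt (by norm_num), fun t ht => ?_⟩
  have ht₁ : t + 1 ≤ 0 := by linarith [min_le_left (-1) (2 * log c - 1)]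
  have htc : exp ((t + 1) / 2) ≤ c := by
    rw [← exp_log hc]
    exact exp_le_exp.2 (by linarith [min_le_right (-1) (2 * log c - 1)])
  refine setIntegral_polydiscSlab_eq hψ hψm hgext hg hgsupp (fun z' hz' => ?_) ht₁
    (hint _) (hint _)
  have hz'g := subset_tsupport g hz'
  exact ⟨(hsupp z' hz'g).1, htc.trans (hcA z' hz'g)⟩

end SncModel

/-- Step 2 in the proof of Lemma 3.4 of the paper: exact evaluation of the
integral `∫_{U ∩ {t < ψ < t+1}} g̃ e^{-ψ}` for the particular extension
`g̃(z', z_n) = g(z') (1 - |z_n|)` (for `|z_n| ≤ 1`, and `0` otherwise), valid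
for all sufficiently negative `t`.  Here `A(z') = ∏_{k<N} |z'_k|^{a_k}`. -/
theorem ohsawa_measure_snc_model_exact_evaluation
    (n N : ℕ) (hn : 1 ≤ n) (hN : N ≤ n - 1)
    (a : Fin N → ℝ)
    (ψ : (Fin n → ℂ) → ℝ)
    (hψ : ∀ z : Fin n → ℂ, ψ z =
      Real.log ((‖(z ⟨n - 1, by omega⟩)‖) ^ 2 *
        ∏ k : Fin N, ‖(z (Fin.castLE (hN.trans (Nat.sub_le n 1)) k))‖ ^ (2 * a k)))
    (g : (Fin (n - 1) → ℂ) → ℝ)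
    (hg : Continuous g) (hgsupp : HasCompactSupport g)
    (hgsub : tsupport g ⊆ {z' : Fin (n - 1) → ℂ |
      (∀ i, ‖(z' i)‖ < 1) ∧ ∀ k : Fin N, z' (Fin.castLE hN k) ≠ 0})
    (gext : (Fin n → ℂ) → ℝ)
    (hgext : ∀ z : Fin n → ℂ, gext z =
      if ‖(z ⟨n - 1, by omega⟩)‖ ≤ 1 then
        g (fun i : Fin (n - 1) => z ⟨i, lt_of_lt_of_le i.isLt (Nat.sub_le n 1)⟩) *
          (1 - ‖(z ⟨n - 1, by omega⟩)‖)
      else 0)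
    (A : (Fin (n - 1) → ℂ) → ℝ)
    (hA : ∀ z' : Fin (n - 1) → ℂ,
      A z' = ∏ k : Fin N, ‖(z' (Fin.castLE hN k))‖ ^ (a k)) :
    ∃ t₀ : ℝ, t₀ < 0 ∧ ∀ t ≤ t₀,
      (∫ z in {z : Fin n → ℂ | (∀ i, ‖(z i)‖ < 1) ∧
          t < ψ z ∧ ψ z < t + 1}, gext z * Real.exp (-ψ z))
        = π * (∫ z' : Fin (n - 1) → ℂ, g z' * (A z') ^ (-(2:ℝ)))
          - 2 * π * (Real.sqrt (Real.exp 1) - 1) * Real.exp (t / 2) *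
            (∫ z' : Fin (n - 1) → ℂ, g z' * (A z') ^ (-(3:ℝ))) := by
  obtain ⟨m, rfl⟩ : ∃ m, n = m + 1 := ⟨n - 1, by omega⟩
  have hψ' (z : Fin (m + 1) → ℂ) : ψ z = log (‖z (Fin.last m)‖ ^ 2 * A (Fin.init z) ^ 2) := by
    rw [hψ, hA, ← Finset.prod_pow]
    congr 2
    refine Finset.prod_congr rfl fun k _ => ?_
    rw [mul_comm, ← Nat.cast_two, rpow_mul_natCast (norm_nonneg _)]
    rfl
  have hA' (z' : Fin m → ℂ) (hz' : ∀ k, z' (Fin.castLE hN k) ≠ 0) :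
      0 < A z' ∧ ContinuousAt A z' := by
    rw [funext hA]
    exact ⟨Finset.prod_pos fun k _ => rpow_pos_of_pos (norm_pos_iff.2 (hz' k)) _,
      tendsto_finsetProd _ fun k _ =>
        (continuousAt_apply _ _).norm.rpow_const (Or.inl (norm_ne_zero_iff.2 (hz' k)))⟩
  exact exists_setIntegral_polydiscSlab_eq hψ' (by rw [funext hψ]; fun_prop) hgext hg hgsupp
    fun z' hz' => ⟨(hgsub hz').1, hA' z' (hgsub hz').2⟩
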